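/- Let A : H → K be a linear isometry between complex Hilbert spaces. Then the block operator U₀ = [[0, A*], [A, −(1 − AA*)]] on H × K is a self-adjoint unitary (involution), i.e., U₀ = U₀* and U₀² = 1. -/

import Mathlib

/- With `P = AA*` the orthogonal projection onto the range of `A`, the square of `U₀` is the
block matrix `[[A*A, A* (P - 1)], [(P - 1) A, P + (1 - P)²]]`, and `A*A = 1` makes it the
identity: `A* P = A*`, `P A = A` and `(1 - P)² = 1 - P`. Self-adjointness is the entrywise
computation `[[T₁₁, T₁₂], [T₂₁, T₂₂]]* = [[T₁₁*, T₂₁*], [T₁₂*, T₂₂*]]`. -/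

open ContinuousLinearMap

/-- The block operator `[[A₁₁, A₁₂], [A₂₁, A₂₂]]` on the Hilbert space direct sum
`H ×₂ K` (modelled as `WithLp 2 (H × K)`), `(x, y) ↦ (A₁₁x + A₁₂y, A₂₁x + A₂₂y)`. -/
noncomputable def blockOp2 {H K : Type*} [NormedAddCommGroup H] [InnerProductSpace ℂ H]
    [NormedAddCommGroup K] [InnerProductSpace ℂ K]
    (A11 : H →L[ℂ] H) (A12 : K →L[ℂ] H) (A21 : H →L[ℂ] K) (A22 : K →L[ℂ] K) :
    WithLp 2 (H × K) →L[ℂ] WithLp 2 (H × K) :=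
  ((WithLp.prodContinuousLinearEquiv 2 ℂ H K).symm : H × K →L[ℂ] WithLp 2 (H × K)) ∘L
    ((A11 ∘L ContinuousLinearMap.fst ℂ H K + A12 ∘L ContinuousLinearMap.snd ℂ H K).prod
      (A21 ∘L ContinuousLinearMap.fst ℂ H K + A22 ∘L ContinuousLinearMap.snd ℂ H K)) ∘L
    ((WithLp.prodContinuousLinearEquiv 2 ℂ H K) : WithLp 2 (H × K) →L[ℂ] H × K)

section BlockOperator

variable {H K : Type*} [NormedAddCommGroup H] [InnerProductSpace ℂ H]
  [NormedAddCommGroup K] [InnerProductSpace ℂ K]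

@[simp]
lemma blockOp2_apply_fst (A11 : H →L[ℂ] H) (A12 : K →L[ℂ] H) (A21 : H →L[ℂ] K)
    (A22 : K →L[ℂ] K) (x : WithLp 2 (H × K)) :
    (blockOp2 A11 A12 A21 A22 x).fst = A11 x.fst + A12 x.snd := rfl

@[simp]
lemma blockOp2_apply_snd (A11 : H →L[ℂ] H) (A12 : K →L[ℂ] H) (A21 : H →L[ℂ] K)
    (A22 : K →L[ℂ] K) (x : WithLp 2 (H × K)) :
    (blockOp2 A11 A12 A21 A22 x).snd = A21 x.fst + A22 x.snd := rfl

lemma blockOp2_ext {T S : WithLp 2 (H × K) →L[ℂ] WithLp 2 (H × K)}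
    (h₁ : ∀ x, (T x).fst = (S x).fst) (h₂ : ∀ x, (T x).snd = (S x).snd) : T = S := by
  ext x
  exact WithLp.ofLp_injective 2 (Prod.ext (h₁ x) (h₂ x))

lemma blockOp2_mul_blockOp2 (A11 : H →L[ℂ] H) (A12 : K →L[ℂ] H) (A21 : H →L[ℂ] K)
    (A22 : K →L[ℂ] K) (B11 : H →L[ℂ] H) (B12 : K →L[ℂ] H) (B21 : H →L[ℂ] K) (B22 : K →L[ℂ] K) :
    blockOp2 A11 A12 A21 A22 * blockOp2 B11 B12 B21 B22 =
      blockOp2 (A11 ∘L B11 + A12 ∘L B21) (A11 ∘L B12 + A12 ∘L B22)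
        (A21 ∘L B11 + A22 ∘L B21) (A21 ∘L B12 + A22 ∘L B22) := by
  rw [mul_def]
  apply blockOp2_ext <;> intro x <;> simp only [comp_apply, blockOp2_apply_fst,
    blockOp2_apply_snd, map_add, add_apply] <;> abel

lemma blockOp2_one_zero_zero_one : blockOp2 (1 : H →L[ℂ] H) 0 0 (1 : K →L[ℂ] K) = 1 := by
  apply blockOp2_ext <;> intro x <;> simp

variable [CompleteSpace H] [CompleteSpace K]

lemma adjoint_blockOp2 (A11 : H →L[ℂ] H) (A12 : K →L[ℂ] H) (A21 : H →L[ℂ] K)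
    (A22 : K →L[ℂ] K) :
    adjoint (blockOp2 A11 A12 A21 A22) =
      blockOp2 (adjoint A11) (adjoint A21) (adjoint A12) (adjoint A22) := by
  refine ((eq_adjoint_iff _ _).mpr fun x y => ?_).symm
  simp only [WithLp.prod_inner_apply, WithLp.ofLp_fst, WithLp.ofLp_snd, blockOp2_apply_fst,
    blockOp2_apply_snd, inner_add_left, inner_add_right, adjoint_inner_left]
  ring

lemma isSelfAdjoint_blockOp2 {A11 : H →L[ℂ] H} {A22 : K →L[ℂ] K} (h₁₁ : IsSelfAdjoint A11)
    (h₂₂ : IsSelfAdjoint A22) (B : H →L[ℂ] K) :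
    IsSelfAdjoint (blockOp2 A11 (adjoint B) B A22) := by
  rw [IsSelfAdjoint, star_eq_adjoint, adjoint_blockOp2, adjoint_adjoint, ← star_eq_adjoint,
    ← star_eq_adjoint, h₁₁.star_eq, h₂₂.star_eq]

end BlockOperator

section Isometry

variable {𝕜 E F : Type*} [RCLike 𝕜] [NormedAddCommGroup E] [InnerProductSpace 𝕜 E] [CompleteSpace E]
  [NormedAddCommGroup F] [InnerProductSpace 𝕜 F] [CompleteSpace F]

lemma isSelfAdjoint_comp_adjoint (V : E →L[𝕜] F) : IsSelfAdjoint (V ∘L adjoint V) :=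
  isSelfAdjoint_iff'.mpr (by rw [adjoint_comp, adjoint_adjoint])

lemma isIdempotentElem_comp_adjoint {V : E →L[𝕜] F} (hV : adjoint V ∘L V = 1) :
    IsIdempotentElem (V ∘L adjoint V) := by
  rw [IsIdempotentElem, mul_def, comp_assoc, ← comp_assoc (adjoint V), hV, one_def, id_comp]

variable {H K : Type*} [NormedAddCommGroup H] [InnerProductSpace ℂ H] [CompleteSpace H]
  [NormedAddCommGroup K] [InnerProductSpace ℂ K] [CompleteSpace K]

lemma blockOp2_isometry_mul_self {V : H →L[ℂ] K} (hV : adjoint V ∘L V = 1) :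
    blockOp2 0 (adjoint V) V (-(1 - V ∘L adjoint V)) *
      blockOp2 0 (adjoint V) V (-(1 - V ∘L adjoint V)) = 1 := by
  have h₁₂ : adjoint V ∘L (1 - V ∘L adjoint V) = 0 := by
    rw [comp_sub, ← comp_assoc, hV, one_def, one_def, comp_id, id_comp, sub_self]
  have h₂₁ : (1 - V ∘L adjoint V) ∘L V = 0 := by
    rw [sub_comp, comp_assoc, hV, one_def, one_def, comp_id, id_comp, sub_self]
  have h₂₂ : (1 - V ∘L adjoint V) ∘L (1 - V ∘L adjoint V) = 1 - V ∘L adjoint V :=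
    (isIdempotentElem_comp_adjoint hV).one_sub
  rw [blockOp2_mul_blockOp2, ← blockOp2_one_zero_zero_one]
  simp only [zero_comp, comp_zero, zero_add, comp_neg, neg_comp, neg_neg, neg_zero, add_zero,
    h₁₂, h₂₁, h₂₂, hV, add_sub_cancel]

end Isometry

/-- Hellwig–Kraus: let `A : H → K` be a linear isometry between complex
Hilbert spaces.  Then the block operator `U₀ = [[0, A*], [A, −(1 − AA*)]]` on `H × K` is a
self-adjoint unitary (involution): `U₀ = U₀*` and `U₀² = 1`. -/
theorem hellwig_kraus_block_selfadjoint_unitary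
    {H K : Type*} [NormedAddCommGroup H] [InnerProductSpace ℂ H] [CompleteSpace H]
    [NormedAddCommGroup K] [InnerProductSpace ℂ K] [CompleteSpace K]
    (A : H →ₗᵢ[ℂ] K) :
    star (blockOp2 0 (adjoint A.toContinuousLinearMap) A.toContinuousLinearMap
        (-(1 - A.toContinuousLinearMap ∘L adjoint A.toContinuousLinearMap)))
      = blockOp2 0 (adjoint A.toContinuousLinearMap) A.toContinuousLinearMap
        (-(1 - A.toContinuousLinearMap ∘L adjoint A.toContinuousLinearMap)) ∧
    blockOp2 0 (adjoint A.toContinuousLinearMap) A.toContinuousLinearMap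
        (-(1 - A.toContinuousLinearMap ∘L adjoint A.toContinuousLinearMap))
      * blockOp2 0 (adjoint A.toContinuousLinearMap) A.toContinuousLinearMap
        (-(1 - A.toContinuousLinearMap ∘L adjoint A.toContinuousLinearMap)) = 1 := by
  have hA : adjoint A.toContinuousLinearMap ∘L A.toContinuousLinearMap = 1 :=
    (isometry_iff_adjoint_comp_self _).mp A.isometry
  have hP : IsSelfAdjoint (-(1 - A.toContinuousLinearMap ∘L adjoint A.toContinuousLinearMap)) :=
    ((IsSelfAdjoint.one _).sub (isSelfAdjoint_comp_adjoint _)).neg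
  exact ⟨isSelfAdjoint_blockOp2 (.zero _) hP _, blockOp2_isometry_mul_self hA⟩
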